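/- arXiv:1310.4429 — 3 statements merged into one kernel-verified Lean document; each statement's English description precedes it below -/
import Mathlib

section
/- If Z₁, Z₂ are independent standard normal random variables with CDF F_Z, and U₁ = F_Z(Z₁), U₂ = F_Z(ρZ₁ + √(1-ρ²)Z₂) for ρ ∈ (-1,1), then the Pearson correlation of U₁ and U₂ equals (6/π)·arcsin(ρ/2). -/
/-!
Since `W = ρ Z₁ + √(1 - ρ²) Z₂` is again standard normal, `U₁` and `U₂` have the moments of a
uniform variable, `∫ Φⁿ dγ = ∫ Φⁿ dΦ = 1 / (n + 1)`: mean `1/2` and variance `1/12`.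
For the cross moment, integrate out `Z₂` first: `∫ Φ(c + q y) dγ(y) = Φ(c / √(1 + q²))`, because
the left side is `P(Y - qX ≤ c)` for independent standard normals `X, Y`. This leaves
`J(a) = ∫ Φ(x) Φ(a x) dγ(x)` with `a = ρ / √(2 - ρ²)`. Differentiating under the integral sign
and integrating by parts gives `J'(a) = (2π (1 + a²) √(a² + 2))⁻¹`, the derivative of
`arctan (a / √(a² + 2)) / (2π)`, and `J(0) = 1/4`; at `a = ρ / √(2 - ρ²)` the arctangent is
`arcsin (ρ / 2)`. The covariance is therefore `arcsin (ρ / 2) / (2π)` and the correlation twelve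
times as much.
-/

open MeasureTheory ProbabilityTheory Real Filter Set Topology
open scoped NNReal ENNReal

local notation "φ" => gaussianPDFReal 0 1
local notation "γ" => gaussianReal 0 1

noncomputable def stdNormalCDF (x : ℝ) : ℝ := ∫ z in Iic x, φ z

@[fun_prop]
lemma continuous_gaussianPDFReal (μ : ℝ) (v : ℝ≥0) : Continuous (gaussianPDFReal μ v) := by
  unfold gaussianPDFReal
  fun_prop

lemma gaussianPDFReal_le (μ : ℝ) (v : ℝ≥0) (x : ℝ) :
    gaussianPDFReal μ v x ≤ (√(2 * π * v))⁻¹ := by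
  rw [gaussianPDFReal]
  refine mul_le_of_le_one_right (by positivity) (exp_le_one_iff.2 ?_)
  exact div_nonpos_of_nonpos_of_nonneg (neg_nonpos.2 (sq_nonneg _)) (by positivity)

lemma gaussianReal_zero_one_Iic (x : ℝ) : γ (Iic x) = ENNReal.ofReal (stdNormalCDF x) :=
  gaussianReal_apply_eq_integral 0 one_ne_zero _

lemma stdNormalCDF_eq_cdf (x : ℝ) : stdNormalCDF x = cdf γ x := by
  rw [cdf_eq_real, measureReal_def, gaussianReal_zero_one_Iic, ENNReal.toReal_ofReal]
  exact setIntegral_nonneg measurableSet_Iic fun z _ => gaussianPDFReal_nonneg 0 1 z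

lemma stdNormalCDF_nonneg (x : ℝ) : 0 ≤ stdNormalCDF x :=
  stdNormalCDF_eq_cdf x ▸ cdf_nonneg _ x

lemma norm_stdNormalCDF_le_one (x : ℝ) : ‖stdNormalCDF x‖ ≤ 1 := by
  rw [Real.norm_of_nonneg (stdNormalCDF_nonneg x), stdNormalCDF_eq_cdf]
  exact cdf_le_one _ x

lemma tendsto_stdNormalCDF_atBot : Tendsto stdNormalCDF atBot (𝓝 0) := by
  simpa only [← funext stdNormalCDF_eq_cdf] using tendsto_cdf_atBot γ

lemma tendsto_stdNormalCDF_atTop : Tendsto stdNormalCDF atTop (𝓝 1) := by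
  simpa only [← funext stdNormalCDF_eq_cdf] using tendsto_cdf_atTop γ

lemma hasDerivAt_stdNormalCDF (x : ℝ) : HasDerivAt stdNormalCDF (φ x) x := by
  have hint : Integrable φ := integrable_gaussianPDFReal 0 1
  have hsplit : stdNormalCDF = fun y => stdNormalCDF 0 + ∫ z in (0 : ℝ)..y, φ z := by
    ext y
    rw [stdNormalCDF, stdNormalCDF,
      ← intervalIntegral.integral_Iic_sub_Iic hint.integrableOn hint.integrableOn]
    ring
  rw [hsplit]
  exact ((continuous_gaussianPDFReal 0 1).integral_hasStrictDerivAt 0 x).hasDerivAt.const_add _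

@[fun_prop]
lemma continuous_stdNormalCDF : Continuous stdNormalCDF :=
  continuous_iff_continuousAt.2 fun x => (hasDerivAt_stdNormalCDF x).continuousAt

lemma stdNormalCDF_zero : stdNormalCDF 0 = 1 / 2 := by
  have hint : Integrable φ := integrable_gaussianPDFReal 0 1
  have hsum : stdNormalCDF 0 + ∫ z in Ioi 0, φ z = 1 := by
    rw [stdNormalCDF, ← setIntegral_union (Iic_disjoint_Ioi le_rfl) measurableSet_Ioi
      hint.integrableOn hint.integrableOn, Iic_union_Ioi, setIntegral_univ,
      integral_gaussianPDFReal_eq_one 0 one_ne_zero]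
  have hsymm : stdNormalCDF 0 = ∫ z in Ioi 0, φ z := by
    rw [stdNormalCDF, ← neg_zero, ← integral_comp_neg_Iic]
    simp [gaussianPDFReal]
  linarith

theorem integral_stdNormalCDF_pow (n : ℕ) : ∫ x, stdNormalCDF x ^ n ∂γ = 1 / (n + 1) := by
  rw [integral_gaussianReal_eq_integral_smul one_ne_zero]
  simp only [smul_eq_mul]
  have hderiv (x : ℝ) : HasDerivAt (fun y => stdNormalCDF y ^ (n + 1) / (n + 1))
      (φ x * stdNormalCDF x ^ n) x := by
    refine (((hasDerivAt_stdNormalCDF x).pow (n + 1)).div_const (n + 1 : ℝ)).congr_deriv ?_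
    push_cast
    field_simp
  have hint : Integrable fun x => φ x * stdNormalCDF x ^ n :=
    (integrable_gaussianPDFReal 0 1).mul_bdd (by fun_prop) (ae_of_all _ fun x => by
      rw [norm_pow]
      exact pow_le_one₀ (norm_nonneg _) (norm_stdNormalCDF_le_one x))
  rw [integral_of_hasDerivAt_of_tendsto hderiv hint
    (by simpa using (tendsto_stdNormalCDF_atBot.pow (n + 1)).div_const (n + 1 : ℝ))
    (by simpa using (tendsto_stdNormalCDF_atTop.pow (n + 1)).div_const (n + 1 : ℝ))]
  simp

theorem map_const_mul_add_const_mul_eq_gaussianReal {Ω : Type*} [MeasurableSpace Ω]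
    {P : Measure Ω} {X Y : Ω → ℝ} (hX : Measurable X) (hY : Measurable Y) (hXY : IndepFun X Y P)
    (hXlaw : P.map X = γ) (hYlaw : P.map Y = γ) (a b : ℝ) :
    P.map (fun ω => a * X ω + b * Y ω) = gaussianReal 0 (a ^ 2 + b ^ 2).toNNReal := by
  have hscale {Z : Ω → ℝ} (hZ : Measurable Z) (hZlaw : P.map Z = γ) (c : ℝ) :
      P.map (fun ω => c * Z ω) = gaussianReal 0 (c ^ 2).toNNReal := by
    rw [← Function.comp_def (c * ·), ← Measure.map_map (measurable_const_mul c) hZ, hZlaw,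
      gaussianReal_map_const_mul, mul_zero, mul_one]
    congr
    simp [sq_nonneg]
  have := gaussianReal_add_gaussianReal_of_indepFun
    (hXY.comp (measurable_const_mul a) (measurable_const_mul b)) (hscale hX hXlaw a)
    (hscale hY hYlaw b)
  rwa [zero_add, ← Real.toNNReal_add (sq_nonneg a) (sq_nonneg b)] at this

lemma gaussianReal_zero_Iic {v : ℝ≥0} (hv : v ≠ 0) (c : ℝ) :
    gaussianReal 0 v (Iic c) = ENNReal.ofReal (stdNormalCDF (c / √v)) := by
  have hsqrt : 0 < √(v : ℝ) := Real.sqrt_pos.2 (by positivity)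
  have hmap : gaussianReal 0 v = Measure.map (√(v : ℝ) * ·) γ := by
    rw [gaussianReal_map_const_mul, mul_zero, mul_one]
    congr
    ext
    simp
  rw [hmap, Measure.map_apply (measurable_const_mul _) measurableSet_Iic,
    ← gaussianReal_zero_one_Iic]
  congr 1
  ext x
  simp [le_div_iff₀ hsqrt, mul_comm]

theorem integral_stdNormalCDF_affine (c q : ℝ) :
    ∫ x, stdNormalCDF (c + q * x) ∂γ = stdNormalCDF (c / √(1 + q ^ 2)) := by
  set g : ℝ × ℝ → ℝ := fun p => -q * p.1 + 1 * p.2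
  have hg : Measurable g := by fun_prop
  have hint : Integrable (fun x => stdNormalCDF (c + q * x)) γ :=
    (integrable_const 1).mono' (by fun_prop) (ae_of_all _ fun x => norm_stdNormalCDF_le_one _)
  have hfubini : Measure.prod γ γ (g ⁻¹' Iic c)
      = ENNReal.ofReal (∫ x, stdNormalCDF (c + q * x) ∂γ) := by
    rw [Measure.prod_apply (hg measurableSet_Iic), ofReal_integral_eq_lintegral_ofReal hint
      (ae_of_all _ fun x => stdNormalCDF_nonneg _)]
    refine lintegral_congr fun x => ?_
    rw [← gaussianReal_zero_one_Iic]
    congr 1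
    ext y
    simp only [g, mem_preimage, mem_Iic]
    constructor <;> intro h <;> linarith
  have hlaw : (Measure.prod γ γ).map g = gaussianReal 0 (1 + q ^ 2).toNNReal := by
    have := map_const_mul_add_const_mul_eq_gaussianReal (P := Measure.prod γ γ) measurable_fst
      measurable_snd (indepFun_prod measurable_id measurable_id) (by simp) (by simp) (-q) 1
    rwa [neg_sq, one_pow, add_comm] at this
  have hv : (1 + q ^ 2).toNNReal ≠ 0 := (Real.toNNReal_pos.2 (by positivity)).ne'
  rw [← Measure.map_apply hg measurableSet_Iic, hlaw, gaussianReal_zero_Iic hv,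
    Real.coe_toNNReal _ (by positivity)] at hfubini
  exact ((ENNReal.ofReal_eq_ofReal_iff (stdNormalCDF_nonneg _)
    (integral_nonneg fun x => stdNormalCDF_nonneg _)).1 hfubini).symm

lemma hasDerivAt_integral_stdNormalCDF_mul_stdNormalCDF_const_mul (a₀ : ℝ) :
    HasDerivAt (fun a => ∫ x, stdNormalCDF x * stdNormalCDF (a * x) ∂γ)
      (∫ x, stdNormalCDF x * (φ (a₀ * x) * x) ∂γ) a₀ := by
  have hid : Integrable (fun x : ℝ => x) γ := (memLp_id_gaussianReal 1).integrable le_rfl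
  refine (hasDerivAt_integral_of_dominated_loc_of_deriv_le
    (F := fun a x => stdNormalCDF x * stdNormalCDF (a * x))
    (F' := fun a x => stdNormalCDF x * (φ (a * x) * x)) (bound := fun x => (√(2 * π))⁻¹ * |x|)
    univ_mem (.of_forall fun a => by fun_prop) ?_ (by fun_prop) (ae_of_all _ fun x a _ => ?_)
    (hid.abs.const_mul _) (ae_of_all _ fun x a _ => ?_)).2
  · exact (integrable_const 1).mono' (by fun_prop) (ae_of_all _ fun x => by
      rw [norm_mul]
      exact mul_le_one₀ (norm_stdNormalCDF_le_one _) (norm_nonneg _) (norm_stdNormalCDF_le_one _))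
  · rw [norm_mul, norm_mul, Real.norm_of_nonneg (gaussianPDFReal_nonneg _ _ _), Real.norm_eq_abs]
    calc ‖stdNormalCDF x‖ * (φ (a * x) * |x|) ≤ 1 * ((√(2 * π))⁻¹ * |x|) := by
          gcongr
          · exact mul_nonneg (gaussianPDFReal_nonneg _ _ _) (abs_nonneg x)
          · exact norm_stdNormalCDF_le_one x
          · simpa using gaussianPDFReal_le 0 1 (a * x)
      _ = _ := one_mul _
  · exact ((hasDerivAt_stdNormalCDF (a * x)).comp a (hasDerivAt_mul_const x)).const_mul _

lemma integral_exp_neg_mul_sq_gaussianReal {b : ℝ} (hb : 0 < 2 * b + 1) :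
    ∫ x, exp (-b * x ^ 2) ∂γ = (√(2 * b + 1))⁻¹ := by
  have h (x : ℝ) : φ x • exp (-b * x ^ 2)
      = (√(2 * π))⁻¹ * exp (-((2 * b + 1) / 2) * x ^ 2) := by
    simp only [gaussianPDFReal, NNReal.coe_one, mul_one, sub_zero, smul_eq_mul]
    rw [mul_assoc, ← exp_add]
    ring_nf
  rw [integral_gaussianReal_eq_integral_smul one_ne_zero]
  simp_rw [h]
  rw [integral_const_mul, integral_gaussian, div_div_eq_mul_div, sqrt_div' _ (by linarith)]
  have : 0 < √(2 * b + 1) := Real.sqrt_pos.2 hb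
  field_simp

/-- Since `φ (a x) φ x` is a multiple of `exp (-k x²)` with `k = (1 + a²) / 2`, the integrand
`Φ x · x φ (a x) φ x` is `Φ · v'` with `v = -(4πk)⁻¹ exp (-k x²)`; integrate by parts. -/
lemma integral_stdNormalCDF_mul_gaussianPDFReal_const_mul_mul_id (a : ℝ) :
    ∫ x, stdNormalCDF x * (φ (a * x) * x) ∂γ = (2 * π * ((1 + a ^ 2) * √(a ^ 2 + 2)))⁻¹ := by
  set k := (1 + a ^ 2) / 2 with hk_def
  have hk : 0 < k := by positivity
  set v : ℝ → ℝ := fun x => -(4 * π * k)⁻¹ * exp (-k * x ^ 2)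
  set v' : ℝ → ℝ := fun x => (2 * π)⁻¹ * (x * exp (-k * x ^ 2))
  have hv (x : ℝ) : HasDerivAt v (v' x) x := by
    refine ((((hasDerivAt_pow 2 x).const_mul (-k)).exp).const_mul _).congr_deriv ?_
    simp only [v']
    field_simp
    ring
  have hintegrand (x : ℝ) : φ x • (stdNormalCDF x * (φ (a * x) * x)) = stdNormalCDF x * v' x := by
    have hpdf : φ (a * x) * φ x = (2 * π)⁻¹ * exp (-k * x ^ 2) := by
      simp only [gaussianPDFReal, NNReal.coe_one, mul_one, sub_zero]
      rw [mul_mul_mul_comm, ← exp_add, ← mul_inv, mul_self_sqrt (by positivity), hk_def]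
      ring_nf
    simp only [smul_eq_mul, v']
    linear_combination (stdNormalCDF x * x) * hpdf
  have hv_int : Integrable v := (integrable_exp_neg_mul_sq hk).const_mul _
  have huv' : Integrable (stdNormalCDF * v') :=
    ((integrable_mul_exp_neg_mul_sq hk).const_mul _).bdd_mul (by fun_prop)
      (ae_of_all _ norm_stdNormalCDF_le_one)
  have hu'v : Integrable (φ * v) :=
    hv_int.bdd_mul (by fun_prop) (ae_of_all _ fun x => by
      rw [Real.norm_of_nonneg (gaussianPDFReal_nonneg _ _ _)]
      exact gaussianPDFReal_le 0 1 x)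
  have huv : Integrable (stdNormalCDF * v) :=
    hv_int.bdd_mul (by fun_prop) (ae_of_all _ norm_stdNormalCDF_le_one)
  rw [integral_gaussianReal_eq_integral_smul one_ne_zero]
  simp_rw [hintegrand]
  rw [integral_mul_deriv_eq_deriv_mul_of_integrable (fun x _ => hasDerivAt_stdNormalCDF x)
    (fun x _ => hv x) huv' hu'v huv]
  simp only [v, mul_left_comm _ (-(4 * π * k)⁻¹), integral_const_mul,
    ← smul_eq_mul (φ _), ← integral_gaussianReal_eq_integral_smul one_ne_zero,
    integral_exp_neg_mul_sq_gaussianReal (b := k) (by linarith)]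
  rw [hk_def, show 2 * ((1 + a ^ 2) / 2) + 1 = a ^ 2 + 2 by ring]
  field_simp
  norm_num

lemma hasDerivAt_arctan_div_sqrt_sq_add_two (a : ℝ) :
    HasDerivAt (fun a => arctan (a / √(a ^ 2 + 2))) ((1 + a ^ 2) * √(a ^ 2 + 2))⁻¹ a := by
  have hpos : 0 < a ^ 2 + 2 := by positivity
  have hsqrt : 0 < √(a ^ 2 + 2) := Real.sqrt_pos.2 hpos
  have hsq : √(a ^ 2 + 2) ^ 2 = a ^ 2 + 2 := sq_sqrt hpos.le
  have hs := ((hasDerivAt_pow 2 a).add_const 2).sqrt hpos.ne'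
  refine (((hasDerivAt_id a).div hs hsqrt.ne').arctan).congr_deriv ?_
  simp only [Pi.div_apply, id, div_pow, hsq]
  field_simp
  rw [hsq]
  ring

theorem integral_stdNormalCDF_mul_stdNormalCDF_const_mul (a : ℝ) :
    ∫ x, stdNormalCDF x * stdNormalCDF (a * x) ∂γ
      = 1 / 4 + arctan (a / √(a ^ 2 + 2)) / (2 * π) := by
  have hJ (a : ℝ) : HasDerivAt (fun a => ∫ x, stdNormalCDF x * stdNormalCDF (a * x) ∂γ)
      (2 * π * ((1 + a ^ 2) * √(a ^ 2 + 2)))⁻¹ a := by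
    simpa only [integral_stdNormalCDF_mul_gaussianPDFReal_const_mul_mul_id] using
      hasDerivAt_integral_stdNormalCDF_mul_stdNormalCDF_const_mul a
  have hH (a : ℝ) : HasDerivAt (fun a => 1 / 4 + arctan (a / √(a ^ 2 + 2)) / (2 * π))
      (2 * π * ((1 + a ^ 2) * √(a ^ 2 + 2)))⁻¹ a := by
    refine ((hasDerivAt_arctan_div_sqrt_sq_add_two a).div_const _).const_add _ |>.congr_deriv ?_
    simp only [mul_inv, div_eq_mul_inv]
    ring
  have hmean : ∫ x, stdNormalCDF x ∂γ = 1 / 2 := by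
    simpa [one_add_one_eq_two] using integral_stdNormalCDF_pow 1
  refine congrFun (eq_of_fderiv_eq (fun a => (hJ a).differentiableAt)
    (fun a => (hH a).differentiableAt) (fun a => ?_) 0 ?_) a
  · rw [(hJ a).hasFDerivAt.fderiv, (hH a).hasFDerivAt.fderiv]
  · simp only [zero_mul, stdNormalCDF_zero, integral_mul_const, hmean, zero_div, arctan_zero]
    norm_num

section Copula

variable {Ω : Type*} [MeasurableSpace Ω] {P : Measure Ω}

lemma integral_stdNormalCDF_comp_pow {X : Ω → ℝ} (hX : Measurable X) (hlaw : P.map X = γ)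
    (n : ℕ) : ∫ ω, stdNormalCDF (X ω) ^ n ∂P = 1 / (n + 1) := by
  rw [← integral_map (f := fun x => stdNormalCDF x ^ n) hX.aemeasurable (by fun_prop), hlaw,
    integral_stdNormalCDF_pow]

theorem integral_stdNormalCDF_mul_stdNormalCDF_correlated [IsFiniteMeasure P] {Z₁ Z₂ : Ω → ℝ}
    (hZ₁ : Measurable Z₁) (hZ₂ : Measurable Z₂) (h₁ : P.map Z₁ = γ) (h₂ : P.map Z₂ = γ)
    (hind : IndepFun Z₁ Z₂ P) {ρ : ℝ} (hρ : |ρ| ≤ 1) :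
    ∫ ω, stdNormalCDF (Z₁ ω) * stdNormalCDF (ρ * Z₁ ω + √(1 - ρ ^ 2) * Z₂ ω) ∂P
      = 1 / 4 + arcsin (ρ / 2) / (2 * π) := by
  set s := √(1 - ρ ^ 2)
  have hρ2 : ρ ^ 2 ≤ 1 := by nlinarith [abs_nonneg ρ, sq_abs ρ]
  have hs2 : s ^ 2 = 1 - ρ ^ 2 := sq_sqrt (by linarith)
  set τ := √(2 - ρ ^ 2)
  have hτ : 0 < τ := Real.sqrt_pos.2 (by linarith)
  have hτ2 : τ ^ 2 = 2 - ρ ^ 2 := sq_sqrt (by linarith)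
  have hjoint : P.map (fun ω => (Z₁ ω, Z₂ ω)) = Measure.prod γ γ := by
    rw [(indepFun_iff_map_prod_eq_prod_map_map hZ₁.aemeasurable hZ₂.aemeasurable).1 hind, h₁, h₂]
  have hint : Integrable (fun p : ℝ × ℝ => stdNormalCDF p.1 * stdNormalCDF (ρ * p.1 + s * p.2))
      (Measure.prod γ γ) :=
    (integrable_const 1).mono' (by fun_prop) (ae_of_all _ fun p => by
      rw [norm_mul]
      exact mul_le_one₀ (norm_stdNormalCDF_le_one _) (norm_nonneg _) (norm_stdNormalCDF_le_one _))
  have hinner (x : ℝ) : ∫ y, stdNormalCDF x * stdNormalCDF (ρ * x + s * y) ∂γ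
      = stdNormalCDF x * stdNormalCDF (ρ / τ * x) := by
    rw [integral_const_mul, integral_stdNormalCDF_affine, hs2,
      show 1 + (1 - ρ ^ 2) = 2 - ρ ^ 2 by ring, div_mul_eq_mul_div]
  have harg : ρ / τ / √((ρ / τ) ^ 2 + 2) = ρ / 2 / √(1 - (ρ / 2) ^ 2) := by
    have h4 : 0 < √(4 - ρ ^ 2) := Real.sqrt_pos.2 (by linarith)
    have hl : √((ρ / τ) ^ 2 + 2) = √(4 - ρ ^ 2) / τ := by
      rw [show (ρ / τ) ^ 2 + 2 = (4 - ρ ^ 2) / τ ^ 2 by field_simp; linarith,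
        sqrt_div' _ (sq_nonneg τ), sqrt_sq hτ.le]
    have hr : √(1 - (ρ / 2) ^ 2) = √(4 - ρ ^ 2) / 2 := by
      rw [show 1 - (ρ / 2) ^ 2 = (4 - ρ ^ 2) / 2 ^ 2 by ring, sqrt_div' _ (sq_nonneg 2),
        sqrt_sq zero_le_two]
    rw [hl, hr]
    field_simp
  rw [← integral_map (f := fun p : ℝ × ℝ => stdNormalCDF p.1 * stdNormalCDF (ρ * p.1 + s * p.2))
    (hZ₁.prodMk hZ₂).aemeasurable (by fun_prop), hjoint, integral_prod _ hint]
  simp only [hinner]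
  rw [integral_stdNormalCDF_mul_stdNormalCDF_const_mul, harg,
    ← arcsin_eq_arctan ⟨by linarith [abs_le.1 hρ], by linarith [abs_le.1 hρ]⟩]

end Copula

/-- The Pearson correlation of Gaussian-copula uniforms is (6/π)·arcsin(ρ/2). -/
theorem stmt16 {Ω : Type*} [MeasureSpace Ω] [IsProbabilityMeasure (ℙ : Measure Ω)]
    (Z₁ Z₂ : Ω → ℝ) (hm1 : Measurable Z₁) (hm2 : Measurable Z₂)
    (h1 : Measure.map Z₁ ℙ = gaussianReal 0 1)
    (h2 : Measure.map Z₂ ℙ = gaussianReal 0 1)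
    (hind : IndepFun Z₁ Z₂ ℙ) (ρ : ℝ) (hρ : ρ ∈ Set.Ioo (-1:ℝ) 1)
    (Φ : ℝ → ℝ) (hΦ : ∀ x, Φ x = ∫ z in Set.Iic x, gaussianPDFReal 0 1 z)
    (U₁ U₂ : Ω → ℝ) (hU₁ : ∀ ω, U₁ ω = Φ (Z₁ ω))
    (hU₂ : ∀ ω, U₂ ω = Φ (ρ * Z₁ ω + Real.sqrt (1 - ρ ^ 2) * Z₂ ω)) :
    ((∫ ω, U₁ ω * U₂ ω ∂ℙ) - (∫ ω, U₁ ω ∂ℙ) * (∫ ω, U₂ ω ∂ℙ)) /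
      Real.sqrt (((∫ ω, (U₁ ω) ^ 2 ∂ℙ) - (∫ ω, U₁ ω ∂ℙ) ^ 2) *
        ((∫ ω, (U₂ ω) ^ 2 ∂ℙ) - (∫ ω, U₂ ω ∂ℙ) ^ 2))
      = (6 / Real.pi) * Real.arcsin (ρ / 2) := by
  obtain rfl : Φ = stdNormalCDF := funext hΦ
  simp only [hU₁, hU₂]
  have hρ' : |ρ| ≤ 1 := abs_le.2 ⟨hρ.1.le, hρ.2.le⟩
  have hmW : Measurable fun ω => ρ * Z₁ ω + √(1 - ρ ^ 2) * Z₂ ω := by fun_prop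
  have hW : Measure.map (fun ω => ρ * Z₁ ω + √(1 - ρ ^ 2) * Z₂ ω) ℙ = γ := by
    rw [map_const_mul_add_const_mul_eq_gaussianReal hm1 hm2 hind h1 h2,
      sq_sqrt (by nlinarith [abs_nonneg ρ, sq_abs ρ]), add_sub_cancel, Real.toNNReal_one]
  have hmean {X : Ω → ℝ} (hX : Measurable X) (hlaw : Measure.map X ℙ = γ) :
      ∫ ω, stdNormalCDF (X ω) ∂ℙ = 1 / 2 := by
    simpa [one_add_one_eq_two] using integral_stdNormalCDF_comp_pow hX hlaw 1
  have hsq {X : Ω → ℝ} (hX : Measurable X) (hlaw : Measure.map X ℙ = γ) :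
      ∫ ω, stdNormalCDF (X ω) ^ 2 ∂ℙ = 1 / 3 := by
    rw [integral_stdNormalCDF_comp_pow hX hlaw 2]
    norm_num
  rw [integral_stdNormalCDF_mul_stdNormalCDF_correlated hm1 hm2 h1 h2 hind hρ', hmean hm1 h1,
    hmean hmW hW, hsq hm1 h1, hsq hmW hW,
    show (1 / 3 - (1 / 2 : ℝ) ^ 2) * (1 / 3 - (1 / 2) ^ 2) = (1 / 12) ^ 2 by norm_num,
    sqrt_sq (by norm_num)]
  field_simp
  ring
end

section
/- For u₁, u₂ ∈ (0,1), the limit as ρ → 1⁻ of ∫₀^{u₁} F_Z((F_Z⁻¹(u₂) - ρ·F_Z⁻¹(v))/√(1-ρ²)) dv equals min(u₁, u₂). -/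
open MeasureTheory ProbabilityTheory Filter Topology Set Function

/-!
For `v < u₂` we have `Φ⁻¹ v < Φ⁻¹ u₂`, so the argument `(Φ⁻¹ u₂ - ρ Φ⁻¹ v) / √(1 - ρ²)` tends
to `+∞` as `ρ → 1⁻` and the integrand tends to `1`; for `v > u₂` it tends to `-∞` and the
integrand to `0`. Dominated convergence (the integrand lies in `[0, 1]`) turns the integral into
the length of `(0, u₁) ∩ (0, u₂)`.
-/

lemma continuous_setIntegral_Iic {f : ℝ → ℝ} (hf : Integrable f) :
    Continuous fun x => ∫ t in Iic x, f t := by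
  have hprimitive : (fun x => ∫ t in Iic x, f t) =
      fun x => (∫ t in Iic 0, f t) + ∫ t in 0..x, f t :=
    funext fun x => by
      rw [← intervalIntegral.integral_Iic_sub_Iic hf.integrableOn hf.integrableOn]; ring
  rw [hprimitive]
  exact continuous_const.add
    (intervalIntegral.continuous_primitive (fun _ _ => hf.intervalIntegrable) 0)

lemma cdf_gaussianReal_eq_integral (μ : ℝ) {v : NNReal} (hv : v ≠ 0) (x : ℝ) :
    cdf (gaussianReal μ v) x = ∫ t in Iic x, gaussianPDFReal μ v t := by
  rw [cdf_eq_real, measureReal_def, gaussianReal_apply_eq_integral μ hv,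
    ENNReal.toReal_ofReal
      (setIntegral_nonneg measurableSet_Iic fun t _ => gaussianPDFReal_nonneg μ v t)]

lemma continuous_cdf_gaussianReal (μ : ℝ) {v : NNReal} (hv : v ≠ 0) :
    Continuous (cdf (gaussianReal μ v)) := by
  simp_rw [funext (cdf_gaussianReal_eq_integral μ hv)]
  exact continuous_setIntegral_Iic (integrable_gaussianPDFReal μ v)

lemma tendsto_inv_sqrt_one_sub_sq_nhdsLT_one :
    Tendsto (fun ρ : ℝ => (√(1 - ρ ^ 2))⁻¹) (𝓝[<] 1) atTop := by
  refine Tendsto.inv_tendsto_nhdsGT_zero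
    (tendsto_nhdsWithin_of_tendsto_nhds_of_eventually_within _ ?_ ?_)
  · have hcont : Continuous fun ρ : ℝ => √(1 - ρ ^ 2) := by fun_prop
    simpa using (hcont.tendsto 1).mono_left nhdsWithin_le_nhds
  · have hpos : ∀ᶠ ρ in 𝓝[<] (1 : ℝ), ρ ∈ Ioo (-1) 1 := Ioo_mem_nhdsLT (by norm_num)
    filter_upwards [hpos] with ρ ⟨hρ₁, hρ₂⟩
    exact Real.sqrt_pos.2 (by nlinarith)

lemma tendsto_sub_mul_nhdsLT_one (a b : ℝ) :
    Tendsto (fun ρ : ℝ => a - ρ * b) (𝓝[<] 1) (𝓝 (a - b)) := by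
  have hcont : Continuous fun ρ : ℝ => a - ρ * b := by fun_prop
  simpa using (hcont.tendsto 1).mono_left nhdsWithin_le_nhds

lemma tendsto_sub_mul_div_sqrt_one_sub_sq_atTop {a b : ℝ} (hba : b < a) :
    Tendsto (fun ρ : ℝ => (a - ρ * b) / √(1 - ρ ^ 2)) (𝓝[<] 1) atTop := by
  simp only [div_eq_mul_inv]
  exact (tendsto_sub_mul_nhdsLT_one a b).pos_mul_atTop (sub_pos.2 hba)
    tendsto_inv_sqrt_one_sub_sq_nhdsLT_one

lemma tendsto_sub_mul_div_sqrt_one_sub_sq_atBot {a b : ℝ} (hab : a < b) :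
    Tendsto (fun ρ : ℝ => (a - ρ * b) / √(1 - ρ ^ 2)) (𝓝[<] 1) atBot := by
  simp only [div_eq_mul_inv]
  exact (tendsto_sub_mul_nhdsLT_one a b).neg_mul_atTop (sub_neg.2 hab)
    tendsto_inv_sqrt_one_sub_sq_nhdsLT_one

lemma Monotone.monotoneOn_invFun {α β : Type*} [Nonempty α] [LinearOrder α] [PartialOrder β]
    {f : α → β} (hf : Monotone f) {s : Set β} (hs : s ⊆ range f) : MonotoneOn (invFun f) s := by
  intro x hx y hy hxy
  rcases hxy.lt_or_eq with hlt | rfl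
  · refine (hf.reflect_lt ?_).le
    rwa [invFun_eq (hs hx), invFun_eq (hs hy)]
  · exact le_rfl

section DistributionFunction

variable {Φ : ℝ → ℝ}

lemma Monotone.mem_Icc_of_tendsto (hmono : Monotone Φ) (hbot : Tendsto Φ atBot (𝓝 0))
    (htop : Tendsto Φ atTop (𝓝 1)) (x : ℝ) : Φ x ∈ Icc 0 1 :=
  ⟨hmono.le_of_tendsto hbot x, hmono.ge_of_tendsto htop x⟩

lemma Continuous.Ioo_subset_range_of_tendsto (hcont : Continuous Φ)
    (hbot : Tendsto Φ atBot (𝓝 0)) (htop : Tendsto Φ atTop (𝓝 1)) : Ioo 0 1 ⊆ range Φ := by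
  rintro u ⟨hu₀, hu₁⟩
  exact mem_range_of_exists_le_of_exists_ge hcont
    ((hbot.eventually (gt_mem_nhds hu₀)).exists.imp fun _ => le_of_lt)
    ((htop.eventually (lt_mem_nhds hu₁)).exists.imp fun _ => le_of_lt)

lemma tendsto_comp_sub_mul_div_sqrt_one_sub_sq (hmono : Monotone Φ)
    (hbot : Tendsto Φ atBot (𝓝 0)) (htop : Tendsto Φ atTop (𝓝 1)) {x y : ℝ} (hxy : Φ x ≠ Φ y) :
    Tendsto (fun ρ : ℝ => Φ ((y - ρ * x) / √(1 - ρ ^ 2))) (𝓝[<] 1)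
      (𝓝 ((Iio (Φ y)).indicator 1 (Φ x))) := by
  rcases hxy.lt_or_gt with hlt | hgt
  · rw [indicator_of_mem (mem_Iio.2 hlt), Pi.one_apply]
    exact htop.comp (tendsto_sub_mul_div_sqrt_one_sub_sq_atTop (hmono.reflect_lt hlt))
  · rw [indicator_of_notMem (notMem_Iio.2 hgt.le)]
    exact hbot.comp (tendsto_sub_mul_div_sqrt_one_sub_sq_atBot (hmono.reflect_lt hgt))

/-- For `Φ` the standard normal CDF, this is the Gaussian-copula CDF `F_{U₁,U₂}(u₁, u₂)` with
correlation `ρ`. -/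
noncomputable def copulaCDF (Φ : ℝ → ℝ) (ρ u₁ u₂ : ℝ) : ℝ :=
  ∫ v in Ioo 0 u₁, Φ ((invFun Φ u₂ - ρ * invFun Φ v) / √(1 - ρ ^ 2))

theorem tendsto_copulaCDF_nhdsLT_one (hmono : Monotone Φ) (hcont : Continuous Φ)
    (hbot : Tendsto Φ atBot (𝓝 0)) (htop : Tendsto Φ atTop (𝓝 1)) {u₁ u₂ : ℝ}
    (h₁ : u₁ ∈ Ioo 0 1) (h₂ : u₂ ∈ Ioo 0 1) :
    Tendsto (fun ρ => copulaCDF Φ ρ u₁ u₂) (𝓝[<] 1) (𝓝 (min u₁ u₂)) := by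
  have hrange := hcont.Ioo_subset_range_of_tendsto hbot htop
  have hsub : Ioo 0 u₁ ⊆ Ioo 0 1 := Ioo_subset_Ioo_right h₁.2.le
  have hlimit : ∫ v in Ioo 0 u₁, (Iio u₂).indicator 1 v = min u₁ u₂ := by
    rw [setIntegral_indicator measurableSet_Iio, Ioo_inter_Iio, Pi.one_def, setIntegral_const,
      Real.volume_real_Ioo_of_le (le_min h₁.1.le h₂.1.le), smul_eq_mul, mul_one, sub_zero]
  have hinvFun : AEMeasurable (invFun Φ) (volume.restrict (Ioo 0 u₁)) :=
    aemeasurable_restrict_of_monotoneOn measurableSet_Ioo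
      (hmono.monotoneOn_invFun (hsub.trans hrange))
  have hne : ∀ᵐ v ∂volume.restrict (Ioo 0 u₁), v ≠ u₂ :=
    ae_restrict_of_ae (measure_eq_zero_iff_ae_notMem.1 (Real.volume_singleton (a := u₂)))
  rw [← hlimit]
  refine tendsto_integral_filter_of_dominated_convergence (fun _ => 1)
    (.of_forall fun ρ => ?_) (.of_forall fun ρ => .of_forall fun v => ?_)
    (integrableOn_const measure_Ioo_lt_top.ne) ?_
  · have hmeas : Measurable fun t => Φ ((invFun Φ u₂ - ρ * t) / √(1 - ρ ^ 2)) :=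
      hmono.measurable.comp (by fun_prop)
    exact (hmeas.comp_aemeasurable hinvFun).aestronglyMeasurable
  · have hΦ := hmono.mem_Icc_of_tendsto hbot htop
      ((invFun Φ u₂ - ρ * invFun Φ v) / √(1 - ρ ^ 2))
    rw [Real.norm_of_nonneg hΦ.1]
    exact hΦ.2
  · filter_upwards [ae_restrict_mem measurableSet_Ioo, hne] with v hv hvu₂
    have hΦv : Φ (invFun Φ v) = v := invFun_eq (hrange (hsub hv))
    have hΦu₂ : Φ (invFun Φ u₂) = u₂ := invFun_eq (hrange h₂)
    simpa only [hΦv, hΦu₂] using tendsto_comp_sub_mul_div_sqrt_one_sub_sq hmono hbot htop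
      (hΦv.trans_ne (hvu₂.trans_eq hΦu₂.symm))

end DistributionFunction

/-- As ρ → 1⁻ the Gaussian-copula joint CDF tends to the comonotone copula. -/
theorem stmt18 (φ Φ : ℝ → ℝ)
    (hφ : ∀ z, φ z = (1 / Real.sqrt (2 * Real.pi)) * Real.exp (-z ^ 2 / 2))
    (hΦ : ∀ x, Φ x = ∫ z in Set.Iic x, φ z)
    (u₁ u₂ : ℝ) (h1 : u₁ ∈ Set.Ioo (0:ℝ) 1) (h2 : u₂ ∈ Set.Ioo (0:ℝ) 1) :
    Filter.Tendsto
      (fun ρ : ℝ => ∫ v in Set.Ioo (0:ℝ) u₁,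
        Φ ((Function.invFun Φ u₂ - ρ * Function.invFun Φ v) / Real.sqrt (1 - ρ ^ 2)))
      (nhdsWithin 1 (Set.Iio 1)) (nhds (min u₁ u₂)) := by
  have hφ_eq : φ = gaussianPDFReal 0 1 := funext fun z => by simp [hφ, gaussianPDFReal]
  have hΦ_eq : Φ = cdf (gaussianReal 0 1) :=
    funext fun x => by rw [hΦ, hφ_eq, cdf_gaussianReal_eq_integral 0 one_ne_zero]
  subst hΦ_eq
  exact tendsto_copulaCDF_nhdsLT_one (monotone_cdf _) (continuous_cdf_gaussianReal 0 one_ne_zero)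
    (tendsto_cdf_atBot _) (tendsto_cdf_atTop _) h1 h2
end

section
/- For u₁, u₂ ∈ (0,1), the limit as ρ → -1⁺ of ∫₀^{u₁} F_Z((F_Z⁻¹(u₂) - ρ·F_Z⁻¹(v))/√(1-ρ²)) dv equals max(u₁ + u₂ - 1, 0). -/
/-!
Write `a = Φ⁻¹(u₂)` and `b = Φ⁻¹(v)`. As `ρ → -1⁺` the argument `(a - ρ b) / √(1 - ρ²)` tends to
`+∞` or `-∞` according to the sign of `a + b`, and by the symmetry `Φ(-x) = 1 - Φ(x)` we have
`a + b > 0` exactly when `v > 1 - u₂`. Dominated convergence (the integrand lies in `[0, 1]`)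
turns the integral into the length of `(1 - u₂, u₁)`.
-/

open MeasureTheory Set Filter Topology

section Density

variable {φ : ℝ → ℝ}

theorem strictMono_integral_Iic (hφ : Integrable φ) (hpos : ∀ z, 0 < φ z) :
    StrictMono fun x ↦ ∫ z in Iic x, φ z := by
  intro x y hxy
  have hdiff := intervalIntegral.integral_Iic_sub_Iic (f := φ) (μ := volume)
    hφ.integrableOn hφ.integrableOn (a := x) (b := y)
  have hpos := intervalIntegral.intervalIntegral_pos_of_pos hφ.intervalIntegrable hpos hxy
  simp only
  linarith

theorem continuous_integral_Iic (hφ : Integrable φ) : Continuous fun x ↦ ∫ z in Iic x, φ z := by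
  have hsplit : (fun x ↦ ∫ z in Iic x, φ z) = fun x ↦ (∫ z in Iic 0, φ z) + ∫ z in 0..x, φ z := by
    funext x
    rw [intervalIntegral.integral_Iic_sub_Iic hφ.integrableOn hφ.integrableOn |>.symm]
    ring
  rw [hsplit]
  exact continuous_const.add (hφ.continuous_primitive 0)

theorem tendsto_integral_Iic_atTop (hφ : Integrable φ) :
    Tendsto (fun x ↦ ∫ z in Iic x, φ z) atTop (𝓝 (∫ z, φ z)) :=
  (aecover_Iic tendsto_id).integral_tendsto_of_countably_generated hφ

theorem integral_Iic_neg_of_even (hφ : Integrable φ) (heven : ∀ z, φ (-z) = φ z) (x : ℝ) :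
    ∫ z in Iic (-x), φ z = (∫ z, φ z) - ∫ z in Iic x, φ z := by
  have hreflect : ∫ z in Iic (-x), φ z = ∫ z in Ioi x, φ z := by
    simpa only [heven, neg_neg] using integral_comp_neg_Iic (-x) φ
  rw [hreflect, ← intervalIntegral.integral_Iic_add_Ioi hφ.integrableOn hφ.integrableOn]
  ring

end Density

theorem tendsto_inv_sqrt_one_sub_sq_nhdsGT_neg_one :
    Tendsto (fun ρ : ℝ ↦ (√(1 - ρ ^ 2))⁻¹) (𝓝[>] (-1)) atTop := by
  refine Tendsto.inv_tendsto_nhdsGT_zero (tendsto_nhdsWithin_iff.mpr ⟨?_, ?_⟩)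
  · have hcont : Continuous fun ρ : ℝ ↦ √(1 - ρ ^ 2) := by fun_prop
    simpa using (hcont.tendsto (-1)).mono_left nhdsWithin_le_nhds
  · filter_upwards [Ioo_mem_nhdsGT (show (-1 : ℝ) < 1 by norm_num)] with ρ hρ
    have : ρ ^ 2 < 1 := by rw [sq_lt_one_iff_abs_lt_one, abs_lt]; exact hρ
    exact Real.sqrt_pos.mpr (by linarith)

theorem tendsto_sub_mul_div_sqrt_atTop {a b : ℝ} (hab : 0 < a + b) :
    Tendsto (fun ρ : ℝ ↦ (a - ρ * b) / √(1 - ρ ^ 2)) (𝓝[>] (-1)) atTop := by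
  have hnum : Tendsto (fun ρ : ℝ ↦ a - ρ * b) (𝓝[>] (-1)) (𝓝 (a + b)) := by
    have hcont : Continuous fun ρ : ℝ ↦ a - ρ * b := by fun_prop
    simpa [sub_eq_add_neg] using (hcont.tendsto (-1)).mono_left nhdsWithin_le_nhds
  simpa only [div_eq_mul_inv] using hnum.pos_mul_atTop hab tendsto_inv_sqrt_one_sub_sq_nhdsGT_neg_one

theorem tendsto_sub_mul_div_sqrt_atBot {a b : ℝ} (hab : a + b < 0) :
    Tendsto (fun ρ : ℝ ↦ (a - ρ * b) / √(1 - ρ ^ 2)) (𝓝[>] (-1)) atBot := by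
  have hneg := tendsto_sub_mul_div_sqrt_atTop (a := -a) (b := -b) (by linarith)
  refine tendsto_neg_atTop_atBot.comp hneg |>.congr fun ρ ↦ ?_
  simp only [Function.comp_apply]
  ring

theorem setIntegral_Ioo_indicator_Ioi_one {c : ℝ} (hc : 0 ≤ c) (u : ℝ) :
    ∫ v in Ioo 0 u, (Ioi c).indicator 1 v = max (u - c) 0 := by
  have hinter : Ioi c ∩ Ioo 0 u = Ioo c u := by
    ext v
    simp only [mem_inter_iff, mem_Ioi, mem_Ioo]
    constructor
    · rintro ⟨hcv, -, hvu⟩; exact ⟨hcv, hvu⟩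
    · rintro ⟨hcv, hvu⟩; exact ⟨hcv, by linarith, hvu⟩
  rw [integral_indicator measurableSet_Ioi, Measure.restrict_restrict measurableSet_Ioi, hinter]
  simp [measureReal_def, Real.volume_Ioo, ENNReal.toReal_ofReal']

section SymmetricCDF

variable {Φ : ℝ → ℝ}

theorem apply_invFun_of_mem_Ioo (hcont : Continuous Φ) (hbot : Tendsto Φ atBot (𝓝 0))
    (htop : Tendsto Φ atTop (𝓝 1)) {v : ℝ} (hv : v ∈ Ioo 0 1) :
    Φ (Function.invFun Φ v) = v := by
  apply Function.invFun_eq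
  obtain ⟨x₀, hx₀⟩ := (hbot.eventually (eventually_lt_nhds hv.1)).exists
  obtain ⟨x₁, hx₁⟩ := (htop.eventually (eventually_gt_nhds hv.2)).exists
  exact intermediate_value_univ x₀ x₁ hcont ⟨hx₀.le, hx₁.le⟩

theorem monotoneOn_invFun_Ioo (hmono : StrictMono Φ)
    (hinv : ∀ v ∈ Ioo (0 : ℝ) 1, Φ (Function.invFun Φ v) = v) :
    MonotoneOn (Function.invFun Φ) (Ioo 0 1) := by
  intro v hv w hw hvw
  rwa [← hmono.le_iff_le, hinv v hv, hinv w hw]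

theorem tendsto_apply_sub_mul_invFun_div_sqrt (hcont : Continuous Φ) (hmono : StrictMono Φ)
    (hbot : Tendsto Φ atBot (𝓝 0)) (htop : Tendsto Φ atTop (𝓝 1))
    (hsymm : ∀ x, Φ (-x) = 1 - Φ x) {u v : ℝ} (hu : u ∈ Ioo 0 1) (hv : v ∈ Ioo 0 1)
    (hne : v ≠ 1 - u) :
    Tendsto (fun ρ ↦ Φ ((Function.invFun Φ u - ρ * Function.invFun Φ v) / √(1 - ρ ^ 2)))
      (𝓝[>] (-1)) (𝓝 ((Ioi (1 - u)).indicator 1 v)) := by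
  have hΦneg : Φ (-Function.invFun Φ u) = 1 - u := by
    rw [hsymm, apply_invFun_of_mem_Ioo hcont hbot htop hu]
  have hΦv := apply_invFun_of_mem_Ioo hcont hbot htop hv
  rcases hne.lt_or_gt with hlt | hgt
  · rw [indicator_of_notMem (by simpa using hlt.le)]
    refine hbot.comp (tendsto_sub_mul_div_sqrt_atBot ?_)
    have := hmono.lt_iff_lt.mp (hΦv.trans_lt (hlt.trans_eq hΦneg.symm))
    linarith
  · rw [indicator_of_mem (by exact hgt), Pi.one_apply]
    refine htop.comp (tendsto_sub_mul_div_sqrt_atTop ?_)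
    have := hmono.lt_iff_lt.mp (hΦneg.trans_lt (hgt.trans_eq hΦv.symm))
    linarith

theorem tendsto_setIntegral_copula_nhdsGT_neg_one (hcont : Continuous Φ) (hmono : StrictMono Φ)
    (hbot : Tendsto Φ atBot (𝓝 0)) (htop : Tendsto Φ atTop (𝓝 1))
    (hsymm : ∀ x, Φ (-x) = 1 - Φ x) {u₁ u₂ : ℝ} (h1 : u₁ ∈ Ioo 0 1) (h2 : u₂ ∈ Ioo 0 1) :
    Tendsto (fun ρ ↦ ∫ v in Ioo 0 u₁,
        Φ ((Function.invFun Φ u₂ - ρ * Function.invFun Φ v) / √(1 - ρ ^ 2)))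
      (𝓝[>] (-1)) (𝓝 (max (u₁ + u₂ - 1) 0)) := by
  have hsub : Ioo 0 u₁ ⊆ Ioo (0 : ℝ) 1 := Ioo_subset_Ioo_right h1.2.le
  have hinv : ∀ v ∈ Ioo (0 : ℝ) 1, Φ (Function.invFun Φ v) = v :=
    fun v ↦ apply_invFun_of_mem_Ioo hcont hbot htop
  have hlimit := setIntegral_Ioo_indicator_Ioi_one (sub_nonneg.mpr h2.2.le) u₁
  rw [show u₁ - (1 - u₂) = u₁ + u₂ - 1 by ring] at hlimit
  rw [← hlimit]
  refine tendsto_integral_filter_of_dominated_convergence (fun _ ↦ 1) (.of_forall fun ρ ↦ ?_)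
    (.of_forall fun ρ ↦ .of_forall fun v ↦ ?_) (integrable_const 1) ?_
  · have hmeas : AEMeasurable (Function.invFun Φ) (volume.restrict (Ioo 0 u₁)) :=
      aemeasurable_restrict_of_monotoneOn measurableSet_Ioo
        ((monotoneOn_invFun_Ioo hmono hinv).mono hsub)
    exact (hcont.measurable.comp_aemeasurable
      ((aemeasurable_const.sub (hmeas.const_mul ρ)).div_const _)).aestronglyMeasurable
  · have hnonneg := hmono.monotone.le_of_tendsto hbot
    have hle_one := hmono.monotone.ge_of_tendsto htop
    rw [Real.norm_eq_abs, abs_le]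
    exact ⟨by linarith [hnonneg ((Function.invFun Φ u₂ - ρ * Function.invFun Φ v) / √(1 - ρ ^ 2))],
      hle_one _⟩
  · have hne : ∀ᵐ v ∂volume.restrict (Ioo 0 u₁), v ≠ 1 - u₂ :=
      ae_restrict_of_ae (measure_eq_zero_iff_ae_notMem.mp (measure_singleton (1 - u₂)))
    filter_upwards [ae_restrict_mem measurableSet_Ioo, hne] with v hv hvne
    exact tendsto_apply_sub_mul_invFun_div_sqrt hcont hmono hbot htop hsymm h2 (hsub hv) hvne

end SymmetricCDF

/-- As ρ → -1⁺ the Gaussian-copula joint CDF tends to the countermonotone copula. -/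
theorem stmt19 (φ Φ : ℝ → ℝ)
    (hφ : ∀ z, φ z = (1 / Real.sqrt (2 * Real.pi)) * Real.exp (-z ^ 2 / 2))
    (hΦ : ∀ x, Φ x = ∫ z in Set.Iic x, φ z)
    (u₁ u₂ : ℝ) (h1 : u₁ ∈ Set.Ioo (0:ℝ) 1) (h2 : u₂ ∈ Set.Ioo (0:ℝ) 1) :
    Filter.Tendsto
      (fun ρ : ℝ => ∫ v in Set.Ioo (0:ℝ) u₁,
        Φ ((Function.invFun Φ u₂ - ρ * Function.invFun Φ v) / Real.sqrt (1 - ρ ^ 2)))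
      (nhdsWithin (-1) (Set.Ioi (-1))) (nhds (max (u₁ + u₂ - 1) 0)) := by
  have hgauss : φ = ProbabilityTheory.gaussianPDFReal 0 1 := by
    funext z
    rw [hφ, ProbabilityTheory.gaussianPDFReal]
    norm_num [one_div]
  have hint : Integrable φ := hgauss ▸ ProbabilityTheory.integrable_gaussianPDFReal 0 1
  have hmass : ∫ z, φ z = 1 := hgauss ▸ ProbabilityTheory.integral_gaussianPDFReal_eq_one 0 one_ne_zero
  have hpos : ∀ z, 0 < φ z := fun z ↦ by rw [hφ]; positivity
  have heven : ∀ z, φ (-z) = φ z := fun z ↦ by rw [hφ, hφ, neg_sq]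
  obtain rfl : Φ = fun x ↦ ∫ z in Iic x, φ z := funext hΦ
  refine tendsto_setIntegral_copula_nhdsGT_neg_one (continuous_integral_Iic hint)
    (strictMono_integral_Iic hint hpos) (tendsto_integral_Iic_zero tendsto_id) ?_ (fun x ↦ ?_) h1 h2
  · simpa only [hmass] using tendsto_integral_Iic_atTop hint
  · simpa only [hmass] using integral_Iic_neg_of_even hint heven x
end
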